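/- arXiv:0805.3513 — 2 statements merged into one kernel-verified Lean document; each statement's English description precedes it below -/
import Mathlib

section
/- Let H be a complex Hilbert space and S an MI-space in B(H) with S ≠ ℂ·I (S is not the set of scalar multiples of the identity). If A ∈ S is such that A² = A∘A also belongs to S, then A = 0. -/
/-!
If `A` and `A²` lie in an MI-space `S`, polarization in `S` gives `⟪A x, A (A y)⟫ = μ ⟪x, y⟫`,
while `A` itself satisfies `⟪A x, A z⟫ = k ⟪x, z⟫`; comparing the two with `z = A y` yields
`k • A = μ • 1`. So a nonzero `A` is a nonzero multiple of the identity and `1 ∈ S`; but then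
polarizing against `1` shows that every element of `S` is a multiple of the identity.
-/

/-- `A` is a scalar multiple of an isometry. -/
def ScalarMultipleOfIsometry {H : Type*} [NormedAddCommGroup H] [InnerProductSpace ℂ H]
    (A : H →L[ℂ] H) : Prop :=
  ∃ (c : ℂ) (V : H →L[ℂ] H), Isometry V ∧ A = c • V

open scoped InnerProductSpace

section

variable {H : Type*} [NormedAddCommGroup H] [InnerProductSpace ℂ H]

lemma ScalarMultipleOfIsometry.exists_inner_map_map {T : H →L[ℂ] H}
    (hT : ScalarMultipleOfIsometry T) : ∃ k : ℂ, ∀ x y : H, ⟪T x, T y⟫_ℂ = k * ⟪x, y⟫_ℂ := by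
  obtain ⟨c, V, hV, rfl⟩ := hT
  have hVnorm : ∀ z : H, ‖V z‖ = ‖z‖ := (AddMonoidHomClass.isometry_iff_norm V).mp hV
  refine ⟨starRingEnd ℂ c * c, fun x y => ?_⟩
  have hVinner : ⟪V x, V y⟫_ℂ = ⟪x, y⟫_ℂ :=
    (⟨V.toLinearMap, hVnorm⟩ : H →ₗᵢ[ℂ] H).inner_map_map x y
  simp only [smul_apply, inner_smul_left, inner_smul_right, hVinner]
  ring

/-- Polarization: apply the hypothesis to `T + U` and `T + i • U`. -/
lemma exists_forall_inner_map_map_eq_of_mem (S : Submodule ℂ (H →L[ℂ] H))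
    (hS : ∀ T ∈ S, ∃ k : ℂ, ∀ x y : H, ⟪T x, T y⟫_ℂ = k * ⟪x, y⟫_ℂ)
    {T U : H →L[ℂ] H} (hT : T ∈ S) (hU : U ∈ S) :
    ∃ μ : ℂ, ∀ x y : H, ⟪T x, U y⟫_ℂ = μ * ⟪x, y⟫_ℂ := by
  obtain ⟨kT, hkT⟩ := hS T hT
  obtain ⟨kU, hkU⟩ := hS U hU
  obtain ⟨a, ha⟩ := hS (T + U) (S.add_mem hT hU)
  obtain ⟨b, hb⟩ := hS (T + Complex.I • U) (S.add_mem hT (S.smul_mem _ hU))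
  refine ⟨(a - kT - kU - Complex.I * (b - kT - kU)) / 2, fun x y => ?_⟩
  have hsum := ha x y
  have hisum := hb x y
  simp only [add_apply, smul_apply,
    inner_add_left, inner_add_right, inner_smul_left, inner_smul_right,
    Complex.conj_I, hkT, hkU] at hsum hisum
  linear_combination (1 / 2 : ℂ) * hsum - (Complex.I / 2) * hisum +
    ((⟪T x, U y⟫_ℂ - ⟪U x, T y⟫_ℂ - kU * ⟪x, y⟫_ℂ) / 2) * Complex.I_mul_I +
    (⟪x, y⟫_ℂ * kU * (1 - Complex.I) / 2) * Complex.I_mul_I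

lemma ContinuousLinearMap.eq_smul_one_of_forall_inner {T : H →L[ℂ] H} {μ : ℂ}
    (hT : ∀ x y : H, ⟪x, T y⟫_ℂ = μ * ⟪x, y⟫_ℂ) : T = μ • 1 := by
  ext y
  refine ext_inner_left ℂ fun x => ?_
  simp [hT, inner_smul_right]

lemma Submodule.eq_span_one_of_one_mem (S : Submodule ℂ (H →L[ℂ] H))
    (hS : ∀ T ∈ S, ∃ k : ℂ, ∀ x y : H, ⟪T x, T y⟫_ℂ = k * ⟪x, y⟫_ℂ) (h1 : 1 ∈ S) :
    S = Submodule.span ℂ {1} := by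
  refine le_antisymm (fun T hT => ?_) (by simpa [Submodule.span_le] using h1)
  obtain ⟨ν, hν⟩ := exists_forall_inner_map_map_eq_of_mem S hS h1 hT
  rw [ContinuousLinearMap.eq_smul_one_of_forall_inner hν]
  exact Submodule.smul_mem _ _ (Submodule.mem_span_singleton_self 1)

end

theorem stmt_14_general {H : Type*} [NormedAddCommGroup H] [InnerProductSpace ℂ H]
    (S : Submodule ℂ (H →L[ℂ] H))
    (hS : ∀ T ∈ S, ScalarMultipleOfIsometry T)
    (hSne : S ≠ Submodule.span ℂ {(1 : H →L[ℂ] H)})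
    (A : H →L[ℂ] H) (hA : A ∈ S) (hA2 : A * A ∈ S) :
    A = 0 := by
  have hS' T (hT : T ∈ S) := (hS T hT).exists_inner_map_map
  obtain ⟨k, hk⟩ := hS' A hA
  obtain ⟨μ, hμ⟩ := exists_forall_inner_map_map_eq_of_mem S hS' hA hA2
  have hkA : k • A = μ • 1 := ContinuousLinearMap.eq_smul_one_of_forall_inner fun x y => by
    rw [← hμ, mul_apply_eq_comp, hk, smul_apply, inner_smul_right]
  by_contra hA0
  have hk0 : k ≠ 0 := fun hk0 => hA0 <| ContinuousLinearMap.ext fun x => by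
    simpa [hk0] using hk x x
  have hμ0 : μ ≠ 0 := fun hμ0 => hA0 <| by simpa [hμ0, hk0] using hkA
  have h1 : (1 : H →L[ℂ] H) = μ⁻¹ • k • A := by rw [hkA, smul_smul, inv_mul_cancel₀ hμ0, one_smul]
  exact hSne (S.eq_span_one_of_one_mem hS' (h1 ▸ S.smul_mem _ (S.smul_mem _ hA)))

theorem stmt_14 {H : Type*} [NormedAddCommGroup H] [InnerProductSpace ℂ H] [CompleteSpace H]
    (S : Submodule ℂ (H →L[ℂ] H))
    (hS : ∀ T ∈ S, ScalarMultipleOfIsometry T)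
    (hSne : S ≠ Submodule.span ℂ {(1 : H →L[ℂ] H)})
    (A : H →L[ℂ] H) (hA : A ∈ S) (hA2 : A * A ∈ S) :
    A = 0 :=
  stmt_14_general S hS hSne A hA hA2
end

section
/- Let H be a complex Hilbert space and S an MI-space in B(H). Then two operators A, B ∈ S commute (AB = BA) if and only if A and B are linearly dependent over ℂ. -/
/-!
If `T = cV` with `V` an isometry, then `T⋆T = |c|²` is a scalar. Polarizing `(A + B)⋆(A + B)`
and `(A + iB)⋆(A + iB)` shows that `A⋆B = γ` is a scalar as well for `A, B` in an MI-space. If `AB = BA` and `A ≠ 0`, then `A⋆A = α ≠ 0` and `αB = A⋆AB = A⋆BA = γA`.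
-/

theorem commute_of_not_linearIndependent_pair {K R : Type*} [Field K] [Ring R] [Algebra K R]
    {A B : R} (h : ¬ LinearIndependent K ![A, B]) : Commute A B := by
  rw [LinearIndependent.pair_iff] at h
  push Not at h
  obtain ⟨s, t, hst, hne⟩ := h
  have hA : s • A = -(t • B) := eq_neg_of_add_eq_zero_left hst
  have hB : t • B = -(s • A) := eq_neg_of_add_eq_zero_right hst
  by_cases hs : s = 0
  · have hcomm : Commute A (t • B) := hB ▸ ((Commute.refl A).smul_right s).neg_right
    exact (Commute.smul_right_iff₀ (hne hs)).mp hcomm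
  · have hcomm : Commute (s • A) B := hA ▸ ((Commute.refl B).smul_left t).neg_left
    exact (Commute.smul_left_iff₀ hs).mp hcomm

theorem star_mul_mem_bot_of_star_mul_self_mem_bot {R : Type*} [Ring R] [StarRing R]
    [Algebra ℂ R] [StarModule ℂ R] {V : Submodule ℂ R}
    (hV : ∀ T ∈ V, star T * T ∈ (⊥ : Subalgebra ℂ R)) {A B : R} (hA : A ∈ V) (hB : B ∈ V) :
    star A * B ∈ (⊥ : Subalgebra ℂ R) := by
  set P := star (A + B) * (A + B) - star A * A - star B * B
  set Q := star (A + Complex.I • B) * (A + Complex.I • B) - star A * A - star B * B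
  have hP : P ∈ (⊥ : Subalgebra ℂ R) :=
    sub_mem (sub_mem (hV _ (V.add_mem hA hB)) (hV A hA)) (hV B hB)
  have hQ : Q ∈ (⊥ : Subalgebra ℂ R) :=
    sub_mem (sub_mem (hV _ (V.add_mem hA (V.smul_mem _ hB))) (hV A hA)) (hV B hB)
  -- `P = A⋆B + B⋆A` and `Q = i (A⋆B - B⋆A)`
  have hPQ : star A * B = (2⁻¹ : ℂ) • (P - Complex.I • Q) := by
    simp only [P, Q, star_add, star_smul, Complex.star_def, Complex.conj_I, add_mul, mul_add,
      mul_smul_comm, smul_mul_assoc]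
    match_scalars <;> ring_nf <;> norm_num [Complex.ext_iff]
  rw [hPQ]
  exact Subalgebra.smul_mem _ (sub_mem hP (Subalgebra.smul_mem _ hQ _)) _

theorem not_linearIndependent_pair_of_commute {R : Type*} [NormedRing R] [StarRing R]
    [CStarRing R] [Algebra ℂ R] {A B : R} (hAA : star A * A ∈ (⊥ : Subalgebra ℂ R))
    (hAB : star A * B ∈ (⊥ : Subalgebra ℂ R)) (hcomm : Commute A B) :
    ¬ LinearIndependent ℂ ![A, B] := by
  obtain ⟨α, hα⟩ := Algebra.mem_bot.mp hAA
  obtain ⟨γ, hγ⟩ := Algebra.mem_bot.mp hAB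
  by_cases hA : A = 0
  · exact fun h => h.ne_zero 0 hA
  have hα0 : α ≠ 0 := by
    rintro rfl
    exact hA (CStarRing.star_mul_self_eq_zero_iff A |>.mp (by simp [← hα]))
  have key : γ • A - α • B = 0 := by
    rw [sub_eq_zero, Algebra.smul_def, Algebra.smul_def, hα, hγ, mul_assoc, mul_assoc,
      hcomm.eq]
  rw [LinearIndependent.pair_iff]
  push Not
  exact ⟨γ, -α, by rwa [neg_smul, ← sub_eq_add_neg], fun _ => neg_ne_zero.mpr hα0⟩

theorem ScalarMultipleOfIsometry.star_mul_self_mem_bot {H : Type*} [NormedAddCommGroup H]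
    [InnerProductSpace ℂ H] [CompleteSpace H] {T : H →L[ℂ] H} (hT : ScalarMultipleOfIsometry T) :
    star T * T ∈ (⊥ : Subalgebra ℂ (H →L[ℂ] H)) := by
  obtain ⟨c, V, hV, rfl⟩ := hT
  have hVV : star V * V = 1 := (ContinuousLinearMap.isometry_iff_adjoint_comp_self V).mp hV
  refine Algebra.mem_bot.mpr ⟨star c * c, ?_⟩
  rw [star_smul, smul_mul_smul_comm, hVV, Algebra.algebraMap_eq_smul_one]

theorem stmt_18 {H : Type*} [NormedAddCommGroup H] [InnerProductSpace ℂ H] [CompleteSpace H]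
    (S : Submodule ℂ (H →L[ℂ] H))
    (hS : ∀ T ∈ S, ScalarMultipleOfIsometry T)
    (A B : H →L[ℂ] H) (hA : A ∈ S) (hB : B ∈ S) :
    A * B = B * A ↔ ¬ LinearIndependent ℂ ![A, B] := by
  have hscalar : ∀ T ∈ S, star T * T ∈ (⊥ : Subalgebra ℂ (H →L[ℂ] H)) :=
    fun T hT => (hS T hT).star_mul_self_mem_bot
  exact ⟨not_linearIndependent_pair_of_commute (hscalar A hA)
      (star_mul_mem_bot_of_star_mul_self_mem_bot hscalar hA hB),
    commute_of_not_linearIndependent_pair⟩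
end
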